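/- Let D be a digraph on n vertices possessing a directed 2-factor X, and suppose every vertex has out-degree at least ⌊log₂ n⌋ + 2. Then D has a directed 2-factor Y whose number of cycles has different parity from the number of cycles of X. -/

import Mathlib

open SimpleGraph

/-- A directed 2-factor of a loopless digraph `D` (given as an arc relation) is a
permutation `σ` of the vertices all of whose arcs `v → σ v` lie in `D`. -/
def IsDirectedTwoFactor {V : Type*} (D : V → V → Prop) (σ : Equiv.Perm V) : Prop :=
  ∀ v, D v (σ v)

/-- The number of (directed) cycles of a fixed-point-free permutation. -/
noncomputable def permNumCycles {V : Type*} [Fintype V] [DecidableEq V]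
    (σ : Equiv.Perm V) : ℕ :=
  σ.cycleType.card

private lemma zmod2_ne {a b : ZMod 2} (h : a ≠ b) : a = b + 1 := by
  revert h; revert a b; decide

private lemma neg_one_pow_congr' {a b : ℕ} (h : a % 2 = b % 2) :
    ((-1 : ℤˣ)) ^ a = (-1 : ℤˣ) ^ b := by
  conv_lhs => rw [← Nat.div_add_mod a 2]
  conv_rhs => rw [← Nat.div_add_mod b 2]
  rw [h, pow_add, pow_add, pow_mul, pow_mul]
  norm_num

private lemma sign_eq_of_fixedPointFree {V : Type*} [Fintype V] [DecidableEq V]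
    (σ : Equiv.Perm V) (h : ∀ v, σ v ≠ v) :
    Equiv.Perm.sign σ = (-1 : ℤˣ) ^ (Fintype.card V + σ.cycleType.card) := by
  have hsupp : σ.support = Finset.univ :=
    Finset.eq_univ_iff_forall.2 fun v => Equiv.Perm.mem_support.2 (h v)
  rw [Equiv.Perm.sign_of_cycleType, Equiv.Perm.sum_cycleType, hsupp, Finset.card_univ]

theorem digraph_two_factor_parity_of_large_outdegree {V : Type*} [Fintype V] [Nonempty V]
    [DecidableEq V] (D : V → V → Prop) (hirr : ∀ v, ¬ D v v)
    (X : Equiv.Perm V) (hX : IsDirectedTwoFactor D X)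
    (hdeg : ∀ v, Nat.log 2 (Nat.card V) + 2 ≤ {w | D v w}.ncard) :
    ∃ Y : Equiv.Perm V, IsDirectedTwoFactor D Y ∧
      permNumCycles Y % 2 ≠ permNumCycles X % 2 := by
  classical
  set N := Fintype.card V with hN
  set L := Nat.log 2 N with hL
  have hN0 : N ≠ 0 := Fintype.card_ne_zero
  -- the auxiliary out-neighbourhoods
  set S : V → Finset V := fun v => Finset.univ.filter (fun u => u ≠ v ∧ D v (X u)) with hS
  have hScard : ∀ v, L + 1 ≤ (S v).card := by
    intro v
    have hd := hdeg v
    rw [Nat.card_eq_fintype_card, ← hN, ← hL] at hd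
    have hto : {w | D v w} = ↑(Finset.univ.filter (fun w => D v w)) := by
      ext w; simp
    rw [hto, Set.ncard_coe_finset] at hd
    have hmem : X v ∈ Finset.univ.filter (fun w => D v w) := by
      simp [hX v]
    have hcard_erase :
        L + 1 ≤ ((Finset.univ.filter (fun w => D v w)).erase (X v)).card := by
      rw [Finset.card_erase_of_mem hmem]; omega
    refine le_trans hcard_erase
      (Finset.card_le_card_of_injOn (fun w => X.symm w) ?_ ?_)
    · intro w hw
      simp only [Finset.mem_coe, Finset.mem_erase, Finset.mem_filter, Finset.mem_univ, true_and] at hw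
      simp only [hS, Finset.mem_coe, Finset.mem_filter, Finset.mem_univ, true_and]
      refine ⟨fun hcon => hw.1 ?_, by simpa using hw.2⟩
      rw [← hcon, Equiv.apply_symm_apply]
    · intro a _ b _ hab
      exact X.symm.injective hab
  -- a "happy" labelling exists by counting
  have key : ∃ f : V → ZMod 2, ∀ v, ∃ u, u ∈ S v ∧ f u ≠ f v := by
    by_contra hcon
    push_neg at hcon
    set Bad : V → Finset (V → ZMod 2) :=
      fun v => Finset.univ.filter (fun f => ∀ u ∈ S v, f u = f v) with hBad
    have hcov : (Finset.univ : Finset (V → ZMod 2)) ⊆ Finset.univ.biUnion Bad := by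
      intro f _
      obtain ⟨v, hv⟩ := hcon f
      exact Finset.mem_biUnion.2 ⟨v, Finset.mem_univ v, by
        simp only [hBad, Finset.mem_filter, Finset.mem_univ, true_and]
        exact fun u hu => hv u hu⟩
    have hvnot : ∀ v, v ∉ S v := by
      intro v hv
      simp only [hS, Finset.mem_filter] at hv
      exact hv.2.1 rfl
    have hbadcard : ∀ v, (Bad v).card ≤ 2 ^ (N - (L + 1)) := by
      intro v
      have h1 : (Bad v).card ≤ 2 ^ (N - (S v).card) := by
        have hinj : ∀ f ∈ Bad v, ∀ g ∈ Bad v,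
            (fun (u : {u // u ∉ S v}) => f u.1) = (fun (u : {u // u ∉ S v}) => g u.1) →
            f = g := by
          intro f hf g hg hfg
          simp only [hBad, Finset.mem_filter] at hf hg
          have hvv : f v = g v := congrFun hfg ⟨v, hvnot v⟩
          funext u
          by_cases hu : u ∈ S v
          · rw [hf.2 u hu, hg.2 u hu, hvv]
          · exact congrFun hfg ⟨u, hu⟩
        calc (Bad v).card
            ≤ (Finset.univ : Finset ({u // u ∉ S v} → ZMod 2)).card :=
              Finset.card_le_card_of_injOn _ (fun f _ => Finset.mem_univ _) hinj
          _ = 2 ^ (N - (S v).card) := by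
              rw [Finset.card_univ, Fintype.card_fun, Fintype.card_subtype_compl,
                Fintype.card_coe]
              norm_num
              rfl
      refine le_trans h1 (Nat.pow_le_pow_right (by norm_num) ?_)
      exact Nat.sub_le_sub_left (hScard v) N
    have hsum : (2 : ℕ) ^ N ≤ N * 2 ^ (N - (L + 1)) := by
      calc (2 : ℕ) ^ N = (Finset.univ : Finset (V → ZMod 2)).card := by
            rw [Finset.card_univ, Fintype.card_fun, ZMod.card]
        _ ≤ (Finset.univ.biUnion Bad).card := Finset.card_le_card hcov
        _ ≤ ∑ v, (Bad v).card := Finset.card_biUnion_le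
        _ ≤ ∑ _v : V, 2 ^ (N - (L + 1)) := Finset.sum_le_sum fun v _ => hbadcard v
        _ = N * 2 ^ (N - (L + 1)) := by rw [Finset.sum_const, Finset.card_univ, smul_eq_mul]
    have hlt : N * 2 ^ (N - (L + 1)) < 2 ^ N := by
      have hLN : L + 1 ≤ N := Nat.succ_le_of_lt (Nat.log_lt_self 2 hN0)
      have hNlt : N < 2 ^ (L + 1) := Nat.lt_pow_succ_log_self (by norm_num) N
      have hk : 0 < 2 ^ (N - (L + 1)) := Nat.pow_pos (by norm_num)
      calc N * 2 ^ (N - (L + 1)) < 2 ^ (L + 1) * 2 ^ (N - (L + 1)) :=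
            (Nat.mul_lt_mul_right hk).2 hNlt
        _ = 2 ^ N := by rw [← pow_add]; congr 1; omega
    omega
  obtain ⟨f, hf⟩ := key
  choose g hg1 hg2 using hf
  have hgD : ∀ v, D v (X (g v)) := by
    intro v
    have := hg1 v
    simp only [hS, Finset.mem_filter] at this
    exact this.2.2
  have hgstep : ∀ v, f (g v) = f v + 1 := fun v => zmod2_ne (hg2 v)
  have hiter : ∀ (t : ℕ) (a : V), f (g^[t] a) = f a + (t : ZMod 2) := by
    intro t
    induction t with
    | zero => intro a; simp
    | succ t ih =>
        intro a
        rw [Function.iterate_succ_apply', hgstep, ih]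
        push_cast
        ring
  -- find a periodic point
  obtain ⟨x0⟩ := ‹Nonempty V›
  have hper : ∃ a : V, ∃ m : ℕ, 0 < m ∧ g^[m] a = a := by
    obtain ⟨i, j, hij, hijeq⟩ :=
      Fintype.exists_ne_map_eq_of_card_lt (fun i : Fin (N + 1) => g^[i.1] x0)
        (by simp; exact le_rfl)
    have hne : i.1 ≠ j.1 := fun h => hij (Fin.ext h)
    rcases lt_or_ge i.1 j.1 with h | h
    · exact ⟨g^[i.1] x0, j.1 - i.1, by omega, by
        rw [← Function.iterate_add_apply, Nat.sub_add_cancel (le_of_lt h), ← hijeq]⟩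
    · have h' : j.1 < i.1 := by omega
      exact ⟨g^[j.1] x0, i.1 - j.1, by omega, by
        rw [← Function.iterate_add_apply, Nat.sub_add_cancel (le_of_lt h'), hijeq]⟩
  obtain ⟨a, m0, hm0pos, hm0⟩ := hper
  set m := Function.minimalPeriod g a with hm
  have hmpos : 0 < m := Function.IsPeriodicPt.minimalPeriod_pos hm0pos hm0
  have hgm : g^[m] a = a := Function.iterate_minimalPeriod
  have hmdvd : (2 : ℕ) ∣ m := by
    have h1 := hiter m a
    rw [hgm] at h1
    have h2 : (m : ZMod 2) = 0 := by
      rwa [left_eq_add] at h1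
    exact (ZMod.natCast_eq_zero_iff m 2).1 h2
  have hm2 : 2 ≤ m := by
    obtain ⟨m', hm'⟩ := hmdvd
    omega
  -- the list of the orbit of a
  set l : List V := (List.range m).map (fun t => g^[t] a) with hldef
  have hlen : l.length = m := by simp [hldef]
  have horbinj : ∀ s t : ℕ, s ≤ t → t < m → g^[s] a = g^[t] a → s = t := by
    intro s t hst htm heq
    by_contra hne
    have hst' : s < t := by omega
    have hper2 : g^[m - (t - s)] a = a := by
      have h1 : g^[m - t] (g^[t] a) = a := by
        rw [← Function.iterate_add_apply, Nat.sub_add_cancel (le_of_lt htm)]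
        exact hgm
      calc g^[m - (t - s)] a = g^[(m - t) + s] a := by congr 1; omega
        _ = g^[m - t] (g^[s] a) := Function.iterate_add_apply _ _ _ _
        _ = g^[m - t] (g^[t] a) := by rw [heq]
        _ = a := h1
    have hle : m ≤ m - (t - s) :=
      Function.IsPeriodicPt.minimalPeriod_le (by omega) hper2
    omega
  have hnodup : l.Nodup := by
    rw [hldef]
    refine List.Nodup.map_on ?_ List.nodup_range
    intro s hs t ht heq
    rw [List.mem_range] at hs ht
    rcases le_or_gt s t with h | h
    · exact horbinj s t h ht heq
    · exact (horbinj t s (le_of_lt h) hs heq.symm).symm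
  have hmeml : ∀ v, v ∈ l ↔ ∃ t, t < m ∧ v = g^[t] a := by
    intro v; simp [hldef, List.mem_map, List.mem_range]
  set c := l.formPerm with hc
  have hc_mem : ∀ t, t < m → c (g^[t] a) = g (g^[t] a) := by
    intro t ht
    have htl : t < l.length := by rw [hlen]; exact ht
    have hget : l[t]'htl = g^[t] a := by simp [hldef]
    have hstep := List.formPerm_apply_getElem l hnodup t htl
    rw [← hget, hc, hstep]
    simp only [hldef, List.getElem_map, List.getElem_range, List.length_map,
      List.length_range]
    rcases lt_or_ge (t + 1) m with h | h
    · rw [Nat.mod_eq_of_lt h, Function.iterate_succ_apply']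
    · have hteq : t + 1 = m := by omega
      rw [hteq, Nat.mod_self]
      simp only [Function.iterate_zero_apply]
      conv_lhs => rw [← hgm]
      rw [← hteq, Function.iterate_succ_apply']
  have hc_not : ∀ v, v ∉ l → c v = v := fun v hv => List.formPerm_apply_of_notMem hv
  -- c is an even-length cycle, so it has sign -1
  have hsignc : Equiv.Perm.sign c = -1 := by
    have hcyc : c.IsCycle := List.isCycle_formPerm hnodup (by rw [hlen]; exact hm2)
    have hne1 : ∀ x : V, l ≠ [x] := by
      intro x hx
      rw [hx] at hlen
      simp at hlen
      omega
    have hsupp : c.support = l.toFinset := List.support_formPerm_of_nodup l hnodup hne1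
    have hcard : c.support.card = m := by
      rw [hsupp, List.toFinset_card_of_nodup hnodup, hlen]
    rw [hcyc.sign, hcard]
    obtain ⟨m', hm'⟩ := hmdvd
    rw [hm', pow_mul]
    norm_num
  refine ⟨X * c, ?_, ?_⟩
  · intro v
    have happ : (X * c) v = X (c v) := rfl
    rw [happ]
    by_cases hv : v ∈ l
    · obtain ⟨t, ht, rfl⟩ := (hmeml v).1 hv
      rw [hc_mem t ht]
      exact hgD _
    · rw [hc_not v hv]
      exact hX v
  · intro hpar
    have hfpfX : ∀ v, X v ≠ v := fun v h => hirr v (by have := hX v; rwa [h] at this)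
    have hfpfY : ∀ v, (X * c) v ≠ v := by
      intro v h
      apply hirr v
      have h2 : D v ((X * c) v) := by
        have happ : (X * c) v = X (c v) := rfl
        rw [happ]
        by_cases hv : v ∈ l
        · obtain ⟨t, ht, rfl⟩ := (hmeml v).1 hv
          rw [hc_mem t ht]; exact hgD _
        · rw [hc_not v hv]; exact hX v
      rwa [h] at h2
    have hsX := sign_eq_of_fixedPointFree X hfpfX
    have hsY := sign_eq_of_fixedPointFree (X * c) hfpfY
    have hmul : Equiv.Perm.sign (X * c) = - Equiv.Perm.sign X := by
      rw [map_mul, hsignc, mul_neg_one]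
    have hcongr : ((-1 : ℤˣ)) ^ (N + (X * c).cycleType.card) =
        (-1 : ℤˣ) ^ (N + X.cycleType.card) := by
      apply neg_one_pow_congr'
      have : (X * c).cycleType.card % 2 = X.cycleType.card % 2 := hpar
      omega
    rw [hsY, hsX, hcongr] at hmul
    rcases Int.units_eq_one_or ((-1 : ℤˣ) ^ (N + X.cycleType.card)) with h | h <;>
      rw [h] at hmul <;> simp at hmul
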